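/- Let H₁ and H₂ be real Hilbert spaces and A : H₁ → H₂ a bounded linear operator with adjoint A*. Let f : H₁ → H₁ be inverse strongly monotone with constant α₁ > 0 and g : H₂ → H₂ inverse strongly monotone with constant α₂ > 0; set α = min{α₁, α₂}. Let C ⊆ H₁ and Q ⊆ H₂ be nonempty, closed and convex, let λ ∈ [0, 2α], define U = P_C ∘ (I − λf) and T = P_Q ∘ (I − λg), let L = ‖A‖², γ ∈ (0, 1/L), and assume Γ = {z ∈ SOL(C,f) : Az ∈ SOL(Q,g)} is nonempty. Then for any sequence {x^k} generated by x^{k+1} = U(x^k + γ A*(T(Ax^k) − Ax^k)) from an arbitrary x⁰ ∈ H₁, one has lim_{k→∞} ‖T(Ax^k) − Ax^k‖ = 0. -/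
import Mathlib
open RealInnerProductSpace

section Helpers
variable {E : Type*} [NormedAddCommGroup E] [InnerProductSpace ℝ E]

/-- Variational inequality for a metric projection given as a distance minimizer. -/
lemma proj_vi {K : Set E} (hK : Convex ℝ K) (P : E → E)
    (hP : ∀ x : E, P x ∈ K ∧ ∀ y ∈ K, ‖x - P x‖ ≤ ‖x - y‖) :
    ∀ x : E, ∀ w ∈ K, ⟪x - P x, w - P x⟫ ≤ 0 := by
  intro x
  have hmem := (hP x).1
  have : (‖x - P x‖ = ⨅ w : K, ‖x - w‖) := by
    haveI : Nonempty K := ⟨⟨P x, hmem⟩⟩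
    apply le_antisymm
    · exact le_ciInf fun w => (hP x).2 w w.2
    · exact ciInf_le ⟨0, fun _ ⟨_, h⟩ => h ▸ norm_nonneg _⟩ (⟨P x, hmem⟩ : K)
  exact (norm_eq_iInf_iff_real_inner_le_zero hK hmem).1 this

/-- Uniqueness: a point satisfying the variational inequality is the projection. -/
lemma proj_eq_of_vi {K : Set E} (hK : Convex ℝ K) (P : E → E)
    (hP : ∀ x : E, P x ∈ K ∧ ∀ y ∈ K, ‖x - P x‖ ≤ ‖x - y‖)
    {v z : E} (hz : z ∈ K) (hvi : ∀ w ∈ K, ⟪v - z, w - z⟫ ≤ 0) : P v = z := by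
  have h1 := proj_vi hK P hP v z hz
  have h2 := hvi (P v) (hP v).1
  have key : ⟪z - P v, z - P v⟫ ≤ 0 := by
    have := add_nonpos h1 h2
    have e : ⟪v - P v, z - P v⟫ + ⟪v - z, P v - z⟫ = ⟪z - P v, z - P v⟫ := by
      simp only [inner_sub_left, inner_sub_right, real_inner_comm (P v) z]
      ring
    linarith [e ▸ this]
  have : ‖z - P v‖ ^ 2 ≤ 0 := by rwa [← real_inner_self_eq_norm_sq]
  have : z - P v = 0 := by
    have := norm_nonneg (z - P v)
    have h0 : ‖z - P v‖ = 0 := by nlinarith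
    exact norm_eq_zero.mp h0
  rw [eq_comm, ← sub_eq_zero]; exact this

/-- Projections are nonexpansive. -/
lemma proj_nonexpansive {K : Set E} (hK : Convex ℝ K) (P : E → E)
    (hP : ∀ x : E, P x ∈ K ∧ ∀ y ∈ K, ‖x - P x‖ ≤ ‖x - y‖)
    (a b : E) : ‖P a - P b‖ ≤ ‖a - b‖ := by
  have h1 := proj_vi hK P hP a (P b) (hP b).1
  have h2 := proj_vi hK P hP b (P a) (hP a).1
  have key : ‖P a - P b‖ ^ 2 ≤ ⟪a - b, P a - P b⟫ := by
    have e : ⟪a - P a, P b - P a⟫ + ⟪b - P b, P a - P b⟫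
        = ⟪P a - P b, P a - P b⟫ - ⟪a - b, P a - P b⟫ := by
      simp only [inner_sub_left, inner_sub_right, real_inner_comm (P b) (P a),
        real_inner_comm b (P a), real_inner_comm a (P b)]; ring
    rw [← real_inner_self_eq_norm_sq]
    linarith [e ▸ add_nonpos h1 h2]
  have hle : ⟪a - b, P a - P b⟫ ≤ ‖a - b‖ * ‖P a - P b‖ := real_inner_le_norm _ _
  by_cases h : ‖P a - P b‖ = 0
  · rw [h]; exact norm_nonneg _
  · have hpos : 0 < ‖P a - P b‖ := lt_of_le_of_ne (norm_nonneg _) (Ne.symm h)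
    nlinarith

end Helpers

set_option maxHeartbeats 1000000 in
/-- Equation (P4): along the iterates of Algorithm `Alg-SVIP`,
`lim_{k→∞} ‖T(A x^k) - A x^k‖ = 0`. -/
theorem svip_algorithm_residual_tendsto_zero
    {H₁ H₂ : Type*} [NormedAddCommGroup H₁] [InnerProductSpace ℝ H₁] [CompleteSpace H₁]
    [NormedAddCommGroup H₂] [InnerProductSpace ℝ H₂] [CompleteSpace H₂]
    (A : H₁ →L[ℝ] H₂)
    (f : H₁ → H₁) (g : H₂ → H₂) (α₁ α₂ α : ℝ) (hα₁ : 0 < α₁) (hα₂ : 0 < α₂)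
    (hf : ∀ x y : H₁, α₁ * ‖f x - f y‖ ^ 2 ≤ ⟪f x - f y, x - y⟫)
    (hg : ∀ x y : H₂, α₂ * ‖g x - g y‖ ^ 2 ≤ ⟪g x - g y, x - y⟫)
    (hα : α = min α₁ α₂)
    (C : Set H₁) (Q : Set H₂)
    (hCne : C.Nonempty) (hCcl : IsClosed C) (hCco : Convex ℝ C)
    (hQne : Q.Nonempty) (hQcl : IsClosed Q) (hQco : Convex ℝ Q)
    (lam : ℝ) (hlam : lam ∈ Set.Icc 0 (2 * α))
    -- the metric projections onto `C` and `Q`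
    (PC : H₁ → H₁) (hPC : ∀ x : H₁, PC x ∈ C ∧ ∀ y ∈ C, ‖x - PC x‖ ≤ ‖x - y‖)
    (PQ : H₂ → H₂) (hPQ : ∀ x : H₂, PQ x ∈ Q ∧ ∀ y ∈ Q, ‖x - PQ x‖ ≤ ‖x - y‖)
    (U : H₁ → H₁) (hU : ∀ x, U x = PC (x - lam • f x))
    (T : H₂ → H₂) (hT : ∀ y, T y = PQ (y - lam • g y))
    (L γ : ℝ) (hL : L = ‖A‖ ^ 2) (hγ : γ ∈ Set.Ioo 0 (1 / L))
    -- the solution set `Γ = {z ∈ SOL(C,f) | A z ∈ SOL(Q,g)}`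
    (Γ : Set H₁)
    (hΓ : Γ = {z : H₁ | (z ∈ C ∧ ∀ w ∈ C, 0 ≤ ⟪f z, w - z⟫) ∧
      (A z ∈ Q ∧ ∀ w ∈ Q, 0 ≤ ⟪g (A z), w - A z⟫)})
    (hΓne : Γ.Nonempty)
    (x : ℕ → H₁)
    (hx : ∀ k, x (k + 1) =
      U (x k + γ • (ContinuousLinearMap.adjoint A) (T (A (x k)) - A (x k)))) :
    Filter.Tendsto (fun k => ‖T (A (x k)) - A (x k)‖) Filter.atTop (nhds 0) := by
  obtain ⟨z, hz⟩ := hΓne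
  rw [hΓ] at hz
  obtain ⟨⟨hzC, hzf⟩, hAzQ, hAzg⟩ := hz
  obtain ⟨hlam0, hlam2⟩ := hlam
  obtain ⟨hγ0, hγ1⟩ := hγ
  have hαα₁ : α ≤ α₁ := hα ▸ min_le_left _ _
  have hαα₂ : α ≤ α₂ := hα ▸ min_le_right _ _
  -- L > 0
  have hLnn : 0 ≤ L := hL ▸ sq_nonneg _
  have hL0 : 0 < L := by
    rcases hLnn.lt_or_eq with h | h
    · exact h
    · exfalso; rw [← h, div_zero] at hγ1; linarith
  have hγL : γ * L < 1 := (lt_div_iff₀ hL0).mp hγ1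
  set c : ℝ := γ * (1 - γ * L) with hc_def
  have hc : 0 < c := mul_pos hγ0 (by linarith)
  -- nonexpansiveness of I - lam f and I - lam g
  have hfne : ∀ a b : H₁, ‖(a - lam • f a) - (b - lam • f b)‖ ≤ ‖a - b‖ := by
    intro a b
    rw [← pow_le_pow_iff_left₀ (norm_nonneg _) (norm_nonneg _) (two_ne_zero)]
    have e : (a - lam • f a) - (b - lam • f b) = (a - b) - lam • (f a - f b) := by
      rw [smul_sub]; abel
    rw [e, norm_sub_sq_real, real_inner_smul_right, norm_smul, mul_pow]
    have hinner := hf a b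
    have hnn : 0 ≤ ‖f a - f b‖ ^ 2 := sq_nonneg _
    have h2a : lam ≤ 2 * α₁ := by linarith
    rw [Real.norm_eq_abs, sq_abs]
    nlinarith [mul_le_mul_of_nonneg_left hinner hlam0,
      mul_nonneg (mul_nonneg hlam0 (by linarith : (0:ℝ) ≤ 2 * α₁ - lam)) hnn,
      real_inner_comm (a - b) (f a - f b)]
  have hgne : ∀ a b : H₂, ‖(a - lam • g a) - (b - lam • g b)‖ ≤ ‖a - b‖ := by
    intro a b
    rw [← pow_le_pow_iff_left₀ (norm_nonneg _) (norm_nonneg _) (two_ne_zero)]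
    have e : (a - lam • g a) - (b - lam • g b) = (a - b) - lam • (g a - g b) := by
      rw [smul_sub]; abel
    rw [e, norm_sub_sq_real, real_inner_smul_right, norm_smul, mul_pow]
    have hinner := hg a b
    have hnn : 0 ≤ ‖g a - g b‖ ^ 2 := sq_nonneg _
    have h2a : lam ≤ 2 * α₂ := by linarith
    rw [Real.norm_eq_abs, sq_abs]
    nlinarith [mul_le_mul_of_nonneg_left hinner hlam0,
      mul_nonneg (mul_nonneg hlam0 (by linarith : (0:ℝ) ≤ 2 * α₂ - lam)) hnn,
      real_inner_comm (a - b) (g a - g b)]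
  have hUne : ∀ a b, ‖U a - U b‖ ≤ ‖a - b‖ := by
    intro a b
    rw [hU, hU]
    exact (proj_nonexpansive hCco PC hPC _ _).trans (hfne a b)
  have hTne : ∀ a b, ‖T a - T b‖ ≤ ‖a - b‖ := by
    intro a b
    rw [hT, hT]
    exact (proj_nonexpansive hQco PQ hPQ _ _).trans (hgne a b)
  -- fixed points
  have hUz : U z = z := by
    rw [hU]
    apply proj_eq_of_vi hCco PC hPC hzC
    intro w hw
    have h := hzf w hw
    have e : (z - lam • f z) - z = -(lam • f z) := by abel
    rw [e, inner_neg_left, real_inner_smul_left]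
    nlinarith [mul_nonneg hlam0 h]
  have hTAz : T (A z) = A z := by
    rw [hT]
    apply proj_eq_of_vi hQco PQ hPQ hAzQ
    intro w hw
    have h := hAzg w hw
    have e : (A z - lam • g (A z)) - A z = -(lam • g (A z)) := by abel
    rw [e, inner_neg_left, real_inner_smul_left]
    nlinarith [mul_nonneg hlam0 h]
  set r : ℕ → H₂ := fun k => T (A (x k)) - A (x k) with hr
  set a : ℕ → ℝ := fun k => ‖x k - z‖ ^ 2 with ha
  -- the key per-step inequality
  have hstep : ∀ k, a (k + 1) + c * ‖r k‖ ^ 2 ≤ a k := by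
    intro k
    have hhalf : 2 * ⟪A (x k) - A z, r k⟫ ≤ -‖r k‖ ^ 2 := by
      have hid : ‖T (A (x k)) - A z‖ ^ 2
          = ‖A (x k) - A z‖ ^ 2 + 2 * ⟪A (x k) - A z, r k⟫ + ‖r k‖ ^ 2 := by
        have e : T (A (x k)) - A z = (A (x k) - A z) + r k := by
          simp only [hr]; abel
        rw [e, norm_add_sq_real]
      have hle : ‖T (A (x k)) - A z‖ ≤ ‖A (x k) - A z‖ := by
        calc ‖T (A (x k)) - A z‖ = ‖T (A (x k)) - T (A z)‖ := by rw [hTAz]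
          _ ≤ ‖A (x k) - A z‖ := hTne _ _
      nlinarith [norm_nonneg (T (A (x k)) - A z), norm_nonneg (A (x k) - A z)]
    have hadj : ‖(ContinuousLinearMap.adjoint A) (r k)‖ ^ 2 ≤ L * ‖r k‖ ^ 2 := by
      have hna : ‖(ContinuousLinearMap.adjoint A)‖ = ‖A‖ :=
        LinearIsometryEquiv.norm_map ContinuousLinearMap.adjoint A
      have h1 : ‖(ContinuousLinearMap.adjoint A) (r k)‖ ≤ ‖A‖ * ‖r k‖ := by
        calc ‖(ContinuousLinearMap.adjoint A) (r k)‖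
            ≤ ‖ContinuousLinearMap.adjoint A‖ * ‖r k‖ :=
              ContinuousLinearMap.le_opNorm _ _
          _ = ‖A‖ * ‖r k‖ := by rw [hna]
      have h2 := mul_self_le_mul_self (norm_nonneg _) h1
      rw [hL]
      nlinarith [norm_nonneg A, norm_nonneg (r k)]
    have hyz : ‖(x k + γ • (ContinuousLinearMap.adjoint A) (r k)) - z‖ ^ 2
        ≤ a k - c * ‖r k‖ ^ 2 := by
      have e : (x k + γ • (ContinuousLinearMap.adjoint A) (r k)) - z
          = (x k - z) + γ • (ContinuousLinearMap.adjoint A) (r k) := by abel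
      rw [e, norm_add_sq_real, real_inner_smul_right, norm_smul, mul_pow]
      have hip : ⟪x k - z, (ContinuousLinearMap.adjoint A) (r k)⟫ = ⟪A (x k) - A z, r k⟫ := by
        rw [ContinuousLinearMap.adjoint_inner_right, map_sub]
      rw [hip]
      have hgn : ‖(γ : ℝ)‖ ^ 2 = γ ^ 2 := by rw [Real.norm_eq_abs, sq_abs]
      rw [hgn]
      have h2 : γ ^ 2 * ‖(ContinuousLinearMap.adjoint A) (r k)‖ ^ 2
          ≤ γ ^ 2 * (L * ‖r k‖ ^ 2) := mul_le_mul_of_nonneg_left hadj (sq_nonneg _)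
      have h3 : 2 * (γ * ⟪A (x k) - A z, r k⟫) ≤ γ * (-‖r k‖ ^ 2) := by nlinarith
      simp only [ha, hc_def]
      nlinarith
    have hfinal : ‖x (k + 1) - z‖ ≤ ‖(x k + γ • (ContinuousLinearMap.adjoint A) (r k)) - z‖ := by
      have hx' : x (k + 1) = U (x k + γ • (ContinuousLinearMap.adjoint A) (r k)) := hx k
      rw [hx']
      calc ‖U (x k + γ • (ContinuousLinearMap.adjoint A) (r k)) - z‖
          = ‖U (x k + γ • (ContinuousLinearMap.adjoint A) (r k)) - U z‖ := by rw [hUz]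
        _ ≤ _ := hUne _ _
    have h4 : ‖x (k + 1) - z‖ ^ 2
        ≤ ‖(x k + γ • (ContinuousLinearMap.adjoint A) (r k)) - z‖ ^ 2 :=
      pow_le_pow_left₀ (norm_nonneg _) hfinal 2
    simp only [ha] at hyz ⊢
    linarith [hyz, h4]
  -- a is antitone and bounded below, hence converges
  have hanti : Antitone a := antitone_nat_of_succ_le fun k => by
    have h := hstep k
    nlinarith [mul_nonneg hc.le (sq_nonneg ‖r k‖)]
  have hbdd : BddBelow (Set.range a) := ⟨0, by rintro _ ⟨k, rfl⟩; exact sq_nonneg _⟩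
  have hconv : Filter.Tendsto a Filter.atTop (nhds (⨅ k, a k)) :=
    tendsto_atTop_ciInf hanti hbdd
  have hconv' : Filter.Tendsto (fun k => a (k + 1)) Filter.atTop (nhds (⨅ k, a k)) :=
    hconv.comp (Filter.tendsto_add_atTop_nat 1)
  have hdiff : Filter.Tendsto (fun k => a k - a (k + 1)) Filter.atTop (nhds 0) := by
    have h := hconv.sub hconv'
    simpa using h
  have hsq : Filter.Tendsto (fun k => ‖r k‖ ^ 2) Filter.atTop (nhds 0) := by
    apply squeeze_zero (fun k => sq_nonneg _) (g := fun k => (a k - a (k + 1)) / c)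
    · intro k
      have h := hstep k
      rw [le_div_iff₀ hc]
      nlinarith
    · have h := hdiff.div_const c
      simpa using h
  have hfin : Filter.Tendsto (fun k => ‖r k‖) Filter.atTop (nhds 0) := by
    have h := (Real.continuous_sqrt.tendsto 0).comp hsq
    simpa [Function.comp_def, Real.sqrt_sq_eq_abs, abs_norm] using h
  exact hfin
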